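/- For all integers k >= 1 and n >= 1, the derivative of the Faulhaber polynomial satisfies P_k'(n) = sum_{j=1}^{k} (-1)^{k-j} * j! * S2(k, j) * H_{j+1}^{(n)}, where H_{j+1}^{(n)} is a hyperharmonic number and S2 denotes Stirling numbers of the second kind. -/

import Mathlib

/-- `hh r n` is the hyperharmonic number `H_n^{(r)}`. -/
def hh : ℕ → ℕ → ℚ
  | 0, n => if n = 0 then 0 else (n : ℚ)⁻¹
  | r + 1, n => ∑ k ∈ Finset.Icc 1 n, hh r k

/-- `S2 n j` is the Stirling number of the second kind. -/
def S2 : ℕ → ℕ → ℕ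
  | 0, 0 => 1
  | 0, _ + 1 => 0
  | _ + 1, 0 => 0
  | n + 1, j + 1 => (j + 1) * S2 n (j + 1) + S2 n j

open Finset Polynomial

lemma S2_zero_right {k : ℕ} (h : 1 ≤ k) : S2 k 0 = 0 := by
  obtain ⟨k, rfl⟩ := Nat.exists_eq_add_of_le' h; rfl

lemma S2_eq_zero : ∀ {k j : ℕ}, k < j → S2 k j = 0 := by
  intro k
  induction k with
  | zero => intro j h; obtain ⟨j, rfl⟩ := Nat.exists_eq_add_of_le' h; rfl
  | succ k ih =>
    intro j h
    match j, h with
    | j + 1, h =>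
      show (j + 1) * S2 k (j + 1) + S2 k j = 0
      rw [ih (by omega), ih (by omega)]; ring

lemma sum_Icc_one {M : Type*} [AddCommMonoid M] (f : ℕ → M) (m : ℕ) :
    ∑ i ∈ Icc 1 m, f i = ∑ t ∈ range m, f (t + 1) := by
  induction m with
  | zero => simp
  | succ m ih => rw [Finset.sum_Icc_succ_top (by omega), ih, Finset.sum_range_succ]

lemma prod_one_add (m : ℕ) : ∏ t ∈ range m, ((1 : ℚ) + t) = m.factorial := by
  induction m with
  | zero => simp
  | succ m ih => rw [Finset.prod_range_succ, ih, Nat.factorial_succ]; push_cast; ring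

lemma asc_shift {K : Type*} [Field K] (x : K) (m : ℕ) :
    ∏ t ∈ range (m+1), (x + t) = x * ∏ t ∈ range m, (x + 1 + t) := by
  rw [Finset.prod_range_succ']
  rw [Finset.prod_congr rfl (fun t (_ : t ∈ range m) =>
    show x + ((t+1:ℕ):K) = x + 1 + t by push_cast; ring)]
  push_cast
  ring

lemma sum_shift {K : Type*} [Field K] (x : K) (m : ℕ) :
    ∑ t ∈ range (m+1), (x + t)⁻¹ = x⁻¹ + ∑ t ∈ range m, (x + 1 + t)⁻¹ := by
  rw [Finset.sum_range_succ']
  rw [Finset.sum_congr rfl (fun t (_ : t ∈ range m) =>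
    show (x + ((t+1:ℕ):K))⁻¹ = (x + 1 + t)⁻¹ by push_cast; ring_nf)]
  push_cast
  ring

lemma sum_asc (j N : ℕ) :
    ((j:ℝ)+1) * ∑ i ∈ Icc 1 N, ∏ t ∈ range j, ((i:ℝ)+t) = ∏ t ∈ range (j+1), ((N:ℝ)+t) := by
  induction N with
  | zero =>
    rw [show Icc 1 0 = ∅ from rfl]
    simp only [Finset.sum_empty, mul_zero]
    rw [eq_comm]
    apply Finset.prod_eq_zero (Finset.mem_range.2 (Nat.succ_pos j))
    simp
  | succ N ih =>
    rw [Finset.sum_Icc_succ_top (by omega), mul_add, ih]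
    push_cast
    rw [asc_shift (N:ℝ) j, Finset.prod_range_succ (fun t => (N:ℝ) + 1 + (t:ℝ))]
    ring

lemma stirl (k : ℕ) (x : ℝ) :
    x ^ k = ∑ j ∈ range (k+1), (-1:ℝ)^(k+j) * (S2 k j : ℝ) * ∏ t ∈ range j, (x + t) := by
  induction k with
  | zero => simp [S2]
  | succ k ih =>
    have hB : ∑ j ∈ range (k+1), (-1:ℝ)^(k+j) * ((j:ℝ) * S2 k j) * ∏ t ∈ range j, (x + t)
        = ∑ j ∈ range (k+1), (-1:ℝ)^(k+j+1) * (((j:ℝ)+1) * S2 k (j+1)) * ∏ t ∈ range (j+1), (x + t) := by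
      rw [Finset.sum_range_succ' (fun j => (-1:ℝ)^(k+j) * ((j:ℝ) * S2 k j) * ∏ t ∈ range j, (x + t)) k,
        Finset.sum_range_succ (fun j => (-1:ℝ)^(k+j+1) * (((j:ℝ)+1) * S2 k (j+1)) * ∏ t ∈ range (j+1), (x + t)) k,
        S2_eq_zero (Nat.lt_succ_self k)]
      simp only [Nat.cast_zero, zero_mul, mul_zero, add_zero, mul_one]
      apply Finset.sum_congr rfl
      intro j _
      rw [show k+(j+1) = k+j+1 from by ring]
      push_cast
      ring
    calc x ^ (k+1) = x ^ k * x := by rw [pow_succ]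
      _ = ∑ j ∈ range (k+1), ((-1:ℝ)^(k+j) * (S2 k j : ℝ) * ∏ t ∈ range (j+1), (x + t)
            - (-1:ℝ)^(k+j) * ((j:ℝ) * S2 k j) * ∏ t ∈ range j, (x + t)) := by
          rw [ih, Finset.sum_mul]
          apply Finset.sum_congr rfl
          intro j _
          rw [Finset.prod_range_succ]
          ring
      _ = ∑ j ∈ range (k+1), (-1:ℝ)^(k+j) * (S2 k j : ℝ) * ∏ t ∈ range (j+1), (x + t)
            - ∑ j ∈ range (k+1), (-1:ℝ)^(k+j) * ((j:ℝ) * S2 k j) * ∏ t ∈ range j, (x + t) := by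
          rw [Finset.sum_sub_distrib]
      _ = ∑ j ∈ range (k+1), (-1:ℝ)^(k+1+(j+1)) * (S2 (k+1) (j+1) : ℝ) * ∏ t ∈ range (j+1), (x + t) := by
          rw [hB, ← Finset.sum_sub_distrib]
          apply Finset.sum_congr rfl
          intro j _
          rw [show S2 (k+1) (j+1) = (j + 1) * S2 k (j + 1) + S2 k j from rfl]
          push_cast
          rw [show k+1+(j+1) = (k+j)+2 from by ring, show k+j+1 = (k+j)+1 from rfl,
            pow_add, pow_add]
          ring
      _ = ∑ j ∈ range (k+1+1), (-1:ℝ)^(k+1+j) * (S2 (k+1) j : ℝ) * ∏ t ∈ range j, (x + t) := by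
          rw [Finset.sum_range_succ' (fun j => (-1:ℝ)^(k+1+j) * (S2 (k+1) j : ℝ) * ∏ t ∈ range j, (x + t)) (k+1),
            S2_zero_right (Nat.le_add_left 1 k)]
          simp

noncomputable def g (n m : ℕ) : ℚ :=
  (∏ t ∈ range m, ((n:ℚ) + t)) * (∑ t ∈ range m, ((n:ℚ) + t)⁻¹) / m.factorial

lemma g_pascal (n m : ℕ) (hn : 1 ≤ n) :
    g (n+1) (m+1) = g (n+1) m + g n (m+1) := by
  have hn0 : ((n:ℚ)) ≠ 0 := by positivity
  have hnm : ((n:ℚ) + 1 + m) ≠ 0 := by positivity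
  unfold g
  have e1 : ∏ t ∈ range (m+1), ((n:ℚ) + t) = (n:ℚ) * ∏ t ∈ range m, ((n:ℚ) + 1 + t) := asc_shift _ m
  have e2 : ∑ t ∈ range (m+1), ((n:ℚ) + t)⁻¹ = (n:ℚ)⁻¹ + ∑ t ∈ range m, ((n:ℚ) + 1 + t)⁻¹ := sum_shift _ m
  have e3 : ∏ t ∈ range (m+1), ((n:ℚ) + 1 + t) = (∏ t ∈ range m, ((n:ℚ) + 1 + t)) * ((n:ℚ) + 1 + m) :=
    Finset.prod_range_succ _ m
  have e4 : ∑ t ∈ range (m+1), ((n:ℚ) + 1 + t)⁻¹ = (∑ t ∈ range m, ((n:ℚ) + 1 + t)⁻¹) + ((n:ℚ) + 1 + m)⁻¹ :=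
    Finset.sum_range_succ _ m
  push_cast
  rw [e1, e2, e3, e4]
  rw [Nat.factorial_succ]
  set P := ∏ t ∈ range m, ((n:ℚ) + 1 + t)
  set S := ∑ t ∈ range m, ((n:ℚ) + 1 + t)⁻¹
  have hf : ((m.factorial : ℚ)) ≠ 0 := by exact_mod_cast Nat.factorial_ne_zero m
  field_simp
  push_cast
  ring

lemma hh_eq_g (n : ℕ) (hn : 1 ≤ n) : ∀ m, hh n m = g n m := by
  induction n, hn using Nat.le_induction with
  | base =>
    intro m
    show ∑ i ∈ Icc 1 m, hh 0 i = g 1 m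
    rw [sum_Icc_one]
    unfold g
    simp only [Nat.cast_one]
    rw [prod_one_add]
    have hf : ((m.factorial : ℚ)) ≠ 0 := by exact_mod_cast Nat.factorial_ne_zero m
    rw [mul_comm, mul_div_assoc, div_self hf, mul_one]
    apply Finset.sum_congr rfl
    intro t _
    show hh 0 (t+1) = _
    simp [hh]
    ring_nf
  | succ n hn ih =>
    have key : ∀ m, ∑ i ∈ Icc 1 m, g n i = g (n+1) m := by
      intro m
      induction m with
      | zero => simp [g]
      | succ m ihm =>
        rw [Finset.sum_Icc_succ_top (by omega), ihm, g_pascal n m hn]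
    intro m
    show ∑ i ∈ Icc 1 m, hh n i = g (n+1) m
    rw [Finset.sum_congr rfl (fun i _ => ih i), key]

lemma deriv_asc (x : ℝ) : ∀ m, (∀ t ∈ range m, x + (t:ℝ) ≠ 0) →
    (Polynomial.derivative (∏ t ∈ range m, (X + C (t:ℝ)))).eval x
      = (∏ t ∈ range m, (x + t)) * ∑ t ∈ range m, (x + t)⁻¹ := by
  intro m
  induction m with
  | zero => simp
  | succ m ih =>
    intro h
    have hm : x + (m:ℝ) ≠ 0 := h m (Finset.self_mem_range_succ m)
    rw [Finset.prod_range_succ (fun t => X + C (t:ℝ)), derivative_mul]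
    rw [eval_add, eval_mul, eval_mul, ih (fun t ht => h t (Finset.mem_range.2 (by
      exact Nat.lt_succ_of_lt (Finset.mem_range.1 ht))))]
    simp only [derivative_add, derivative_X, derivative_C, add_zero, eval_one, eval_add,
      eval_X, eval_C, mul_one]
    rw [Polynomial.eval_prod]
    simp only [eval_add, eval_X, eval_C]
    rw [Finset.prod_range_succ (fun t => x + (t:ℝ)), Finset.sum_range_succ (fun t => (x + (t:ℝ))⁻¹)]
    field_simp

lemma sign_eq {k j : ℕ} (h : j ≤ k) : (-1:ℝ)^(k-j) = (-1:ℝ)^(k+j) := by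
  rw [show k+j = (k-j) + 2*j from by omega, pow_add, pow_mul, neg_one_sq, one_pow, mul_one]

theorem faulhaber_derivative_eq_hyperharmonic (k n : ℕ) (hk : 1 ≤ k) (hn : 1 ≤ n)
    (P : Polynomial ℝ)
    (hP : ∀ N : ℕ, 1 ≤ N → P.eval (N : ℝ) = ∑ i ∈ Finset.Icc 1 N, (i : ℝ) ^ k) :
    (Polynomial.derivative P).eval (n : ℝ) =
      ∑ j ∈ Finset.Icc 1 k,
        (-1 : ℝ) ^ (k - j) * (j.factorial : ℝ) * (S2 k j : ℝ) * ((hh n (j + 1) : ℚ) : ℝ) := by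
  set Q : Polynomial ℝ := ∑ j ∈ Icc 1 k,
    C ((-1:ℝ)^(k+j) * (S2 k j : ℝ) / ((j:ℝ)+1)) * ∏ t ∈ range (j+1), (X + C (t:ℝ)) with hQ
  have hQeval : ∀ N : ℕ, Q.eval (N:ℝ) = ∑ i ∈ Icc 1 N, (i:ℝ)^k := by
    intro N
    rw [hQ]
    rw [eval_finset_sum]
    have step1 : ∀ j ∈ Icc 1 k,
        (C ((-1:ℝ)^(k+j) * (S2 k j : ℝ) / ((j:ℝ)+1)) * ∏ t ∈ range (j+1), (X + C (t:ℝ))).eval (N:ℝ)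
        = ∑ i ∈ Icc 1 N, (-1:ℝ)^(k+j) * (S2 k j : ℝ) * ∏ t ∈ range j, ((i:ℝ)+t) := by
      intro j _
      rw [eval_mul, eval_C, eval_prod]
      simp only [eval_add, eval_X, eval_C]
      rw [← sum_asc j N, Finset.mul_sum, Finset.mul_sum]
      apply Finset.sum_congr rfl
      intro i _
      have : ((j:ℝ)+1) ≠ 0 := by positivity
      field_simp
    rw [Finset.sum_congr rfl step1, Finset.sum_comm]
    apply Finset.sum_congr rfl
    intro i _
    rw [stirl k (i:ℝ),
      Finset.sum_range_succ' (fun j => (-1:ℝ)^(k+j) * (S2 k j : ℝ) * ∏ t ∈ range j, ((i:ℝ) + t)) k,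
      S2_zero_right hk, sum_Icc_one]
    simp
  have hPQ : P = Q := by
    apply Polynomial.eq_of_infinite_eval_eq
    apply Set.Infinite.mono (s := Set.range (fun N : ℕ => ((N+1 : ℕ) : ℝ)))
    · rintro x ⟨N, rfl⟩
      show P.eval _ = Q.eval _
      rw [hP (N+1) (by omega), hQeval (N+1)]
    · apply Set.infinite_range_of_injective
      intro a b hab
      simpa using hab
  rw [hPQ, hQ, derivative_sum]
  rw [eval_finset_sum]
  apply Finset.sum_congr rfl
  intro j hj
  obtain ⟨hj1, hj2⟩ := Finset.mem_Icc.1 hj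
  rw [derivative_C_mul, eval_mul, eval_C, deriv_asc (n:ℝ) (j+1)
    (fun t _ => by positivity)]
  rw [hh_eq_g n hn (j+1)]
  have hgcast : ((g n (j+1) : ℚ) : ℝ)
      = (∏ t ∈ range (j+1), ((n:ℝ) + t)) * (∑ t ∈ range (j+1), ((n:ℝ) + t)⁻¹) / ((j+1).factorial : ℝ) := by
    unfold g
    push_cast
    ring
  rw [hgcast, sign_eq hj2, Nat.factorial_succ]
  have h1 : ((j:ℝ)+1) ≠ 0 := by positivity
  have h2 : ((j.factorial : ℝ)) ≠ 0 := by exact_mod_cast Nat.factorial_ne_zero j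
  push_cast
  field_simp
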